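/- Let X = A^ℕ with A finite, φ continuous, L the transfer operator, ν an eigenmeasure with L*ν = λν, λ > 0, and μ a T-invariant probability measure with μ(C) > 0 ⟹ ν(C) > 0 for cylinders C. Define h_n(x) = μ([x]_n)/ν([x]_n) where [x]_n is the cylinder on coordinates 0,…,n-1. If h_n converges uniformly on X to a function h, then h is continuous, h is an eigenfunction: Lh = λh, and inf h > 0. -/

import Mathlib

/-!
Write `h_n(x) = μ([x]_n) / ν([x]_n)`. Shift invariance of `μ` gives
`μ([x]_n) = ∑_a μ([ax]_{n+1})`, and the eigenmeasure equation tested against the (continuous)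
indicator of `[ax]_{n+1}` gives `λ ν([ax]_{n+1}) = ∫_{[x]_n} e^{φ(ay)} dν(y)`. Together,
`λ h_n(x) = ∑_a h_{n+1}(ax) ⨍_{[x]_n} e^{φ(ay)} dν(y)`, and since these averages tend to
`e^{φ(ax)}` by continuity, letting `n → ∞` yields `L h = λ h`.

The same identity shows inductively that `ν` charges every cylinder, so `∫ h_n dν = μ(X) = 1`
and hence `∫ h dν = 1`: `h` is positive somewhere, hence on some cylinder `[x₀]_N`. Since
`e^φ ≥ c > 0`, the eigen-equation gives `c h(ax) ≤ λ h(x)`, and prepending the first `N`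
symbols of `x₀` to an arbitrary `x` bounds `h(x)` below by `(c/λ)^N` times that positive bound.
-/

open MeasureTheory

/-- Prepending a symbol to a one-sided configuration. -/
def consSeq {A : Type*} (a : A) (x : ℕ → A) : ℕ → A :=
  fun n => match n with
  | 0 => a
  | Nat.succ m => x m

/-- The left shift on `A^ℕ`. -/
def shiftT {A : Type*} : (ℕ → A) → (ℕ → A) := fun x n => x (n + 1)

/-- The cylinder `[x]_n = {y : y_i = x_i for 0 ≤ i < n}`. -/
def cylSet {A : Type*} (x : ℕ → A) (n : ℕ) : Set (ℕ → A) :=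
  {y | ∀ i < n, y i = x i}

open Filter Topology PiNat

section

variable {X E ι : Type*} [MeasurableSpace X] [NormedAddCommGroup E]

theorem Continuous.integrable_of_compactSpace [TopologicalSpace X] [CompactSpace X]
    [OpensMeasurableSpace X] {μ : Measure X} [IsFiniteMeasure μ] {f : X → E} (hf : Continuous f) :
    Integrable f μ :=
  hf.integrable_of_hasCompactSupport (.of_compactSpace f)

theorem ContinuousAt.tendsto_setAverage [NormedSpace ℝ E] [CompleteSpace E] [TopologicalSpace X]
    [OpensMeasurableSpace X] {μ : Measure X} [IsLocallyFiniteMeasure μ] {x : X} {f : X → E}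
    (hf : ContinuousAt f x) (hfm : StronglyMeasurableAtFilter f (𝓝 x) μ) {s : ι → Set X}
    {l : Filter ι} (hs : Tendsto s l (𝓝 x).smallSets) (hμs : ∀ᶠ i in l, μ (s i) ≠ 0) :
    Tendsto (fun i => ⨍ y in s i, f y ∂μ) l (𝓝 (f x)) := by
  have hlim := (hf.integral_sub_linear_isLittleO_ae hfm hs).tendsto_inv_smul_nhds_zero
  rw [← zero_add (f x)]
  have hfin : ∀ᶠ i in l, μ (s i) < ⊤ := hs.eventually (μ.finiteAt_nhds x).eventually
  refine (hlim.add_const (f x)).congr' ?_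
  filter_upwards [hμs, hfin] with i hi hfi
  have hreal : μ.real (s i) ≠ 0 := (measureReal_ne_zero_iff hfi.ne).2 hi
  rw [setAverage_eq, smul_sub, smul_smul, inv_mul_cancel₀ hreal, one_smul, sub_add_cancel]

theorem TendstoUniformly.tendsto_integral [NormedSpace ℝ E] {μ : Measure X} [IsFiniteMeasure μ]
    {F : ι → X → E} {f : X → E} {l : Filter ι} (hF : ∀ᶠ i in l, Integrable (F i) μ)
    (hf : Integrable f μ) (h : TendstoUniformly F f l) :
    Tendsto (fun i => ∫ x, F i x ∂μ) l (𝓝 (∫ x, f x ∂μ)) := by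
  rw [Metric.tendsto_nhds]
  intro ε hε
  have hδ : 0 < ε / (μ.real Set.univ + 1) := by positivity
  filter_upwards [hF, Metric.tendstoUniformly_iff.1 h _ hδ] with i hFi hi
  rw [dist_eq_norm, ← integral_sub hFi hf]
  calc ‖∫ x, F i x - f x ∂μ‖ ≤ ε / (μ.real Set.univ + 1) * μ.real Set.univ :=
        norm_integral_le_of_norm_le_const <| .of_forall fun x => by
          rw [← dist_eq_norm, dist_comm]; exact (hi x).le
    _ < ε := by
        rw [div_mul_eq_mul_div, div_lt_iff₀ (by positivity)]
        nlinarith [measureReal_nonneg (μ := μ) (s := Set.univ)]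

end

theorem integral_measureReal_preimage_div {X Y : Type*} [MeasurableSpace X] [MeasurableSpace Y]
    [Fintype Y] [MeasurableSingletonClass Y] {f : X → Y} (hf : Measurable f)
    (μ ν : Measure X) [IsFiniteMeasure μ] [IsFiniteMeasure ν]
    (hμν : ∀ y, ν (f ⁻¹' {y}) = 0 → μ (f ⁻¹' {y}) = 0) :
    ∫ x, μ.real (f ⁻¹' {f x}) / ν.real (f ⁻¹' {f x}) ∂ν = μ.real Set.univ := by
  let g : Y → ℝ := fun y => μ.real (f ⁻¹' {y}) / ν.real (f ⁻¹' {y})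
  have hterm : ∀ y, (ν.map f).real {y} • g y = (μ.map f).real {y} := by
    intro y
    rw [map_measureReal_apply hf (measurableSet_singleton y),
      map_measureReal_apply hf (measurableSet_singleton y), smul_eq_mul]
    by_cases hy : ν (f ⁻¹' {y}) = 0
    · simp [g, measureReal_def, hy, hμν y hy]
    · exact mul_div_cancel₀ _ ((measureReal_ne_zero_iff (measure_ne_top ν _)).2 hy)
  calc ∫ x, g (f x) ∂ν = ∫ y, g y ∂ν.map f :=
        (integral_map hf.aemeasurable (measurable_of_finite g).aestronglyMeasurable).symm
    _ = ∑ y, (μ.map f).real {y} := by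
        simp only [integral_fintype Integrable.of_finite, hterm]
    _ = μ.real Set.univ := by
        rw [sum_measureReal_singleton, Finset.coe_univ, map_measureReal_apply hf .univ,
          Set.preimage_univ]

section OneSidedShift

variable {A : Type*}

lemma consSeq_head_shiftT (x : ℕ → A) : consSeq (x 0) (shiftT x) = x := by
  funext i
  cases i <;> rfl

lemma consSeq_mem_cylinder_succ {a b : A} {x y : ℕ → A} {n : ℕ} :
    consSeq a y ∈ cylinder (consSeq b x) (n + 1) ↔ a = b ∧ y ∈ cylinder x n := by
  simp only [mem_cylinder_iff, Nat.forall_lt_succ_left]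
  rfl

lemma mem_cylinder_consSeq_succ {a : A} {x y : ℕ → A} {n : ℕ} :
    y ∈ cylinder (consSeq a x) (n + 1) ↔ y 0 = a ∧ shiftT y ∈ cylinder x n := by
  conv_lhs => rw [← consSeq_head_shiftT y]
  exact consSeq_mem_cylinder_succ

lemma preimage_shiftT_cylinder (x : ℕ → A) (n : ℕ) :
    shiftT ⁻¹' cylinder x n = ⋃ a, cylinder (consSeq a x) (n + 1) := by
  ext y
  simp only [Set.mem_preimage, Set.mem_iUnion, mem_cylinder_consSeq_succ, exists_eq_left']

lemma pairwise_disjoint_cylinder_consSeq (x : ℕ → A) (n : ℕ) :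
    Pairwise (Function.onFun Disjoint fun a : A => cylinder (consSeq a x) (n + 1)) :=
  fun _ _ hab => Set.disjoint_left.2 fun _ hya hyb =>
    hab <| (mem_cylinder_consSeq_succ.1 hya).1.symm.trans (mem_cylinder_consSeq_succ.1 hyb).1

lemma preimage_restrict_eq_cylinder (x : ℕ → A) (n : ℕ) :
    (fun y (i : Fin n) => y i) ⁻¹' {fun i : Fin n => x i} = cylinder x n := by
  ext y
  simp [funext_iff, Fin.forall_iff]

noncomputable def likelihoodRatio [MeasurableSpace A] (μ ν : Measure (ℕ → A)) (n : ℕ)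
    (x : ℕ → A) : ℝ :=
  μ.real (cylinder x n) / ν.real (cylinder x n)

lemma likelihoodRatio_nonneg [MeasurableSpace A] (μ ν : Measure (ℕ → A)) (n : ℕ) (x : ℕ → A) :
    0 ≤ likelihoodRatio μ ν n x :=
  div_nonneg measureReal_nonneg measureReal_nonneg

noncomputable def transferOp [Fintype A] (φ f : (ℕ → A) → ℝ) (x : ℕ → A) : ℝ :=
  ∑ a, Real.exp (φ (consSeq a x)) * f (consSeq a x)

lemma mul_le_transferOp [Fintype A] {φ f : (ℕ → A) → ℝ} (hf : 0 ≤ f) {c : ℝ}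
    (hc : ∀ y, c ≤ Real.exp (φ y)) (a : A) (x : ℕ → A) :
    c * f (consSeq a x) ≤ transferOp φ f x :=
  (mul_le_mul_of_nonneg_right (hc _) (hf _)).trans <|
    Finset.single_le_sum (f := fun b => Real.exp (φ (consSeq b x)) * f (consSeq b x))
      (fun _ _ => mul_nonneg (Real.exp_pos _).le (hf _)) (Finset.mem_univ a)

lemma exists_mem_cylinder_mul_pow_le {f : (ℕ → A) → ℝ} {c lam : ℝ} (hc : 0 ≤ c) (hlam : 0 ≤ lam)
    (hstep : ∀ a z, c * f (consSeq a z) ≤ lam * f z) (n : ℕ) (x z : ℕ → A) :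
    ∃ y ∈ cylinder x n, c ^ n * f y ≤ lam ^ n * f z := by
  induction n generalizing x with
  | zero => exact ⟨z, by simp⟩
  | succ n ih =>
    obtain ⟨y, hy, hyz⟩ := ih (shiftT x)
    refine ⟨consSeq (x 0) y, ?_, ?_⟩
    · rw [← consSeq_head_shiftT x]
      exact consSeq_mem_cylinder_succ.2 ⟨rfl, hy⟩
    · calc c ^ (n + 1) * f (consSeq (x 0) y) = c ^ n * (c * f (consSeq (x 0) y)) := by ring
        _ ≤ c ^ n * (lam * f y) := mul_le_mul_of_nonneg_left (hstep _ _) (by positivity)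
        _ = lam * (c ^ n * f y) := by ring
        _ ≤ lam * (lam ^ n * f z) := mul_le_mul_of_nonneg_left hyz hlam
        _ = lam ^ (n + 1) * f z := by ring

section Topology

variable [TopologicalSpace A]

@[fun_prop]
lemma continuous_consSeq (a : A) : Continuous (consSeq a) :=
  continuous_pi fun n => by
    cases n with
    | zero => exact continuous_const
    | succ n => exact continuous_apply n

lemma continuous_shiftT : Continuous (shiftT : (ℕ → A) → ℕ → A) :=
  continuous_pi fun n => continuous_apply (n + 1)

variable [DiscreteTopology A]

lemma isClopen_cylinder (x : ℕ → A) (n : ℕ) : IsClopen (cylinder x n) := by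
  rw [← preimage_restrict_eq_cylinder]
  exact (isClopen_discrete _).preimage (by fun_prop)

lemma tendsto_cylinder_smallSets (x : ℕ → A) : Tendsto (cylinder x) atTop (𝓝 x).smallSets := by
  refine tendsto_smallSets_iff.2 fun t ht => ?_
  obtain ⟨_, ⟨y, n, rfl⟩, hxy, hsub⟩ :=
    (isTopologicalBasis_cylinders fun _ => A).mem_nhds_iff.1 ht
  rw [← mem_cylinder_iff_eq.1 hxy] at hsub
  exact eventually_atTop.2 ⟨n, fun m hm => (cylinder_anti x hm).trans hsub⟩

lemma continuous_of_forall_mem_cylinder {β : Type*} [TopologicalSpace β] {g : (ℕ → A) → β}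
    (n : ℕ) (hg : ∀ x, ∀ y ∈ cylinder x n, g y = g x) : Continuous g :=
  IsLocallyConstant.continuous <| (IsLocallyConstant.iff_exists_open g).2 fun x =>
    ⟨cylinder x n, (isClopen_cylinder x n).isOpen, self_mem_cylinder x n, hg x⟩

lemma continuous_likelihoodRatio [MeasurableSpace A] (μ ν : Measure (ℕ → A)) (n : ℕ) :
    Continuous (likelihoodRatio μ ν n) :=
  continuous_of_forall_mem_cylinder n fun x y hy => by
    rw [likelihoodRatio, likelihoodRatio, mem_cylinder_iff_eq.1 hy]

theorem exists_pos_le_of_mul_consSeq_le {f : (ℕ → A) → ℝ} (hf : Continuous f) {c lam : ℝ}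
    (hc : 0 < c) (hlam : 0 < lam) (hstep : ∀ a z, c * f (consSeq a z) ≤ lam * f z)
    {x₀ : ℕ → A} (hx₀ : 0 < f x₀) :
    ∃ ε > 0, ∀ z, ε ≤ f z := by
  have hnhds : {y | f x₀ / 2 < f y} ∈ 𝓝 x₀ :=
    (isOpen_lt continuous_const hf).mem_nhds (half_lt_self hx₀)
  obtain ⟨N, hN⟩ := (tendsto_smallSets_iff.1 (tendsto_cylinder_smallSets x₀) _ hnhds).exists
  refine ⟨c ^ N * (f x₀ / 2) / lam ^ N, by positivity, fun z => ?_⟩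
  obtain ⟨y, hy, hyz⟩ := exists_mem_cylinder_mul_pow_le hc.le hlam.le hstep N x₀ z
  rw [div_le_iff₀' (by positivity)]
  calc c ^ N * (f x₀ / 2) ≤ c ^ N * f y := by gcongr; exact (hN hy).le
    _ ≤ lam ^ N * f z := hyz

end Topology

def IsTransferEigenmeasure [Fintype A] [TopologicalSpace A] [MeasurableSpace A]
    (φ : (ℕ → A) → ℝ) (lam : ℝ) (ν : Measure (ℕ → A)) : Prop :=
  ∀ f, Continuous f → ∫ x, transferOp φ f x ∂ν = lam * ∫ x, f x ∂ν

section Eigenmeasure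

variable [Fintype A] [TopologicalSpace A] [DiscreteTopology A] [MeasurableSpace A] [BorelSpace A]

lemma measurableSet_cylinder (x : ℕ → A) (n : ℕ) : MeasurableSet (cylinder x n) :=
  (isClopen_cylinder x n).isOpen.measurableSet

lemma measureReal_cylinder_eq_sum {μ : Measure (ℕ → A)} [IsFiniteMeasure μ]
    (hinv : μ.map shiftT = μ) (x : ℕ → A) (n : ℕ) :
    μ.real (cylinder x n) = ∑ a, μ.real (cylinder (consSeq a x) (n + 1)) := by
  conv_lhs => rw [← hinv]
  rw [map_measureReal_apply continuous_shiftT.measurable (measurableSet_cylinder x n),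
    preimage_shiftT_cylinder, measureReal_iUnion_fintype (pairwise_disjoint_cylinder_consSeq x n)
      fun a => measurableSet_cylinder _ _]

lemma integral_likelihoodRatio (μ ν : Measure (ℕ → A)) [IsProbabilityMeasure μ]
    [IsFiniteMeasure ν] (hν : ∀ (x : ℕ → A) (n : ℕ), ν (cylinder x n) ≠ 0) (n : ℕ) :
    ∫ x, likelihoodRatio μ ν n x ∂ν = 1 := by
  let restrict : (ℕ → A) → Fin n → A := fun y i => y i
  have hfiber : ∀ x, restrict ⁻¹' {restrict x} = cylinder x n := fun x =>
    preimage_restrict_eq_cylinder x n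
  have hμν : ∀ w, ν (restrict ⁻¹' {w}) = 0 → μ (restrict ⁻¹' {w}) = 0 := by
    intro w hw
    rcases (restrict ⁻¹' {w}).eq_empty_or_nonempty with hempty | ⟨x, rfl⟩
    · rw [hempty, measure_empty]
    · exact absurd hw (hfiber x ▸ hν x n)
  simpa [likelihoodRatio, hfiber] using
    integral_measureReal_preimage_div (by fun_prop : Measurable restrict) μ ν hμν

variable {φ : (ℕ → A) → ℝ} {lam : ℝ} {ν : Measure (ℕ → A)}

lemma setIntegral_exp_consSeq_cylinder (heigm : IsTransferEigenmeasure φ lam ν)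
    (a : A) (x : ℕ → A) (n : ℕ) :
    ∫ y in cylinder x n, Real.exp (φ (consSeq a y)) ∂ν =
      lam * ν.real (cylinder (consSeq a x) (n + 1)) := by
  have hL : transferOp φ ((cylinder (consSeq a x) (n + 1)).indicator 1) =
      (cylinder x n).indicator fun y => Real.exp (φ (consSeq a y)) := by
    funext y
    rw [transferOp, Finset.sum_eq_single a (fun b _ hb => by
      rw [Set.indicator_of_notMem (consSeq_mem_cylinder_succ.not.2 (hb ·.1)), mul_zero])
      (by simp)]
    by_cases hy : y ∈ cylinder x n
    · rw [Set.indicator_of_mem (consSeq_mem_cylinder_succ.2 ⟨rfl, hy⟩), Set.indicator_of_mem hy,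
        Pi.one_apply, mul_one]
    · rw [Set.indicator_of_notMem (consSeq_mem_cylinder_succ.not.2 (hy ·.2)),
        Set.indicator_of_notMem hy, mul_zero]
  have := heigm ((cylinder (consSeq a x) (n + 1)).indicator 1)
    ((isClopen_cylinder _ _).continuous_indicator continuous_one)
  rwa [hL, integral_indicator (measurableSet_cylinder x n),
    integral_indicator_one (measurableSet_cylinder _ _)] at this

lemma measure_cylinder_ne_zero [IsProbabilityMeasure ν] (hφ : Continuous φ)
    (heigm : IsTransferEigenmeasure φ lam ν) (x : ℕ → A) (n : ℕ) : ν (cylinder x n) ≠ 0 := by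
  induction n generalizing x with
  | zero => simp
  | succ n ih =>
    have key := setIntegral_exp_consSeq_cylinder heigm (x 0) (shiftT x) n
    rw [consSeq_head_shiftT] at key
    have : NeZero (ν.restrict (cylinder (shiftT x) n)) := ⟨Measure.restrict_eq_zero.not.2 (ih _)⟩
    have hpos := integral_exp_pos (μ := ν.restrict (cylinder (shiftT x) n))
      (f := fun y => φ (consSeq (x 0) y))
      (by fun_prop : Continuous fun y => Real.exp (φ (consSeq (x 0) y))).integrable_of_compactSpace
    intro hzero
    rw [key, measureReal_def, hzero] at hpos
    simp at hpos

lemma setAverage_exp_consSeq_cylinder (heigm : IsTransferEigenmeasure φ lam ν)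
    (a : A) (x : ℕ → A) (n : ℕ) :
    ⨍ y in cylinder x n, Real.exp (φ (consSeq a y)) ∂ν =
      lam * ν.real (cylinder (consSeq a x) (n + 1)) / ν.real (cylinder x n) := by
  rw [setAverage_eq, setIntegral_exp_consSeq_cylinder heigm, smul_eq_mul, inv_mul_eq_div]

lemma lam_mul_likelihoodRatio_eq_sum {μ : Measure (ℕ → A)} [IsFiniteMeasure μ]
    [IsFiniteMeasure ν] (hinv : μ.map shiftT = μ)
    (heigm : IsTransferEigenmeasure φ lam ν)
    (hν : ∀ (x : ℕ → A) (n : ℕ), ν (cylinder x n) ≠ 0) (x : ℕ → A) (n : ℕ) :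
    lam * likelihoodRatio μ ν n x = ∑ a, likelihoodRatio μ ν (n + 1) (consSeq a x) *
      ⨍ y in cylinder x n, Real.exp (φ (consSeq a y)) ∂ν := by
  simp only [likelihoodRatio, setAverage_exp_consSeq_cylinder heigm]
  rw [measureReal_cylinder_eq_sum hinv, Finset.sum_div, Finset.mul_sum]
  refine Finset.sum_congr rfl fun a _ => ?_
  have h₁ := (measureReal_ne_zero_iff (measure_ne_top ν _)).2 (hν (consSeq a x) (n + 1))
  field_simp

theorem transferOp_eq_mul_of_tendsto_likelihoodRatio {μ : Measure (ℕ → A)} [IsFiniteMeasure μ]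
    [IsProbabilityMeasure ν] (hφ : Continuous φ) (hinv : μ.map shiftT = μ)
    (heigm : IsTransferEigenmeasure φ lam ν)
    {h : (ℕ → A) → ℝ} (hlim : ∀ x, Tendsto (fun n => likelihoodRatio μ ν n x) atTop (𝓝 (h x)))
    (x : ℕ → A) : transferOp φ h x = lam * h x := by
  have hν := measure_cylinder_ne_zero hφ heigm
  have havg (a : A) : Tendsto (fun n => ⨍ y in cylinder x n, Real.exp (φ (consSeq a y)) ∂ν)
      atTop (𝓝 (Real.exp (φ (consSeq a x)))) :=
    (by fun_prop : Continuous fun y => Real.exp (φ (consSeq a y))).continuousAt.tendsto_setAverage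
      (Continuous.stronglyMeasurableAtFilter (by fun_prop) _ _) (tendsto_cylinder_smallSets x)
      (.of_forall (hν x))
  have hsum : Tendsto (fun n => lam * likelihoodRatio μ ν n x) atTop (𝓝 (transferOp φ h x)) := by
    simp only [lam_mul_likelihoodRatio_eq_sum hinv heigm hν, transferOp, mul_comm (Real.exp _)]
    exact tendsto_finsetSum _ fun a _ =>
      ((hlim _).comp (tendsto_add_atTop_nat 1)).mul (havg a)
  exact tendsto_nhds_unique hsum ((hlim x).const_mul lam)

end Eigenmeasure

end OneSidedShift

theorem uniform_limit_likelihood_ratio_is_eigenfunction_general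
    {A : Type*} [Fintype A]
    [TopologicalSpace A] [DiscreteTopology A] [MeasurableSpace A]
    [BorelSpace A]
    (φ : (ℕ → A) → ℝ) (hφ : Continuous φ)
    (lam : ℝ) (hlam : 0 < lam)
    (ν : Measure (ℕ → A)) [IsProbabilityMeasure ν]
    (heigm : ∀ f : (ℕ → A) → ℝ, Continuous f →
      ∫ x, (∑ a : A, Real.exp (φ (consSeq a x)) * f (consSeq a x)) ∂ν =
        lam * ∫ x, f x ∂ν)
    (μ : Measure (ℕ → A)) [IsProbabilityMeasure μ]
    (hinv : Measure.map shiftT μ = μ)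
    (h : (ℕ → A) → ℝ)
    (hunif : TendstoUniformly
      (fun n x => (μ (cylSet x n)).toReal / (ν (cylSet x n)).toReal)
      h Filter.atTop) :
    Continuous h ∧
      (∀ x : ℕ → A,
        ∑ a : A, Real.exp (φ (consSeq a x)) * h (consSeq a x) = lam * h x) ∧
      ∃ ε > 0, ∀ x : ℕ → A, ε ≤ h x := by
  -- `cylSet x n` is `PiNat.cylinder x n` by definition
  change TendstoUniformly (likelihoodRatio μ ν) h atTop at hunif
  have hcont : Continuous h := hunif.continuous (.of_forall (continuous_likelihoodRatio μ ν))
  have heig : ∀ x, transferOp φ h x = lam * h x :=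
    transferOp_eq_mul_of_tendsto_likelihoodRatio hφ hinv heigm hunif.tendsto_at
  have hint : ∫ x, h x ∂ν = 1 := by
    have hlim := hunif.tendsto_integral (μ := ν)
      (.of_forall fun n => (continuous_likelihoodRatio μ ν n).integrable_of_compactSpace)
      hcont.integrable_of_compactSpace
    simp only [integral_likelihoodRatio μ ν (measure_cylinder_ne_zero hφ heigm)] at hlim
    exact tendsto_nhds_unique hlim tendsto_const_nhds
  obtain ⟨x₀, hx₀⟩ := exists_integral_le (μ := ν) hcont.integrable_of_compactSpace
  have hx₀_pos : 0 < h x₀ := by linarith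
  obtain ⟨m, hm⟩ := (isCompact_range hφ).bddBelow
  have hstep (a : A) (z : ℕ → A) : Real.exp m * h (consSeq a z) ≤ lam * h z :=
    heig z ▸ mul_le_transferOp (fun y => ge_of_tendsto' (hunif.tendsto_at y)
      fun n => likelihoodRatio_nonneg μ ν n y) (fun y => Real.exp_le_exp.2 (hm ⟨y, rfl⟩)) a z
  exact ⟨hcont, heig, exists_pos_le_of_mul_consSeq_le hcont (Real.exp_pos m) hlam hstep
    hx₀_pos⟩

/-- Lemma 2.1, Radon–Nikodym interpretation: with `ν` an
eigenmeasure of `L_φ` (eigenvalue `λ > 0`) and `μ` a shift-invariant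
probability measure positive on cylinders whenever `ν` is (i.e.\ cylinder
absolute continuity), if the likelihood ratios
`h_n(x) = μ([x]_n)/ν([x]_n)` converge uniformly to `h`, then `h` is a
continuous eigenfunction `Lh = λh` with `inf h > 0`. -/
theorem uniform_limit_likelihood_ratio_is_eigenfunction
    {A : Type*} [Fintype A] [Nonempty A]
    [TopologicalSpace A] [DiscreteTopology A] [MeasurableSpace A]
    [BorelSpace A]
    (φ : (ℕ → A) → ℝ) (hφ : Continuous φ)
    (lam : ℝ) (hlam : 0 < lam)
    (ν : Measure (ℕ → A)) [IsProbabilityMeasure ν]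
    (heigm : ∀ f : (ℕ → A) → ℝ, Continuous f →
      ∫ x, (∑ a : A, Real.exp (φ (consSeq a x)) * f (consSeq a x)) ∂ν =
        lam * ∫ x, f x ∂ν)
    (μ : Measure (ℕ → A)) [IsProbabilityMeasure μ]
    (hinv : Measure.map shiftT μ = μ)
    (hcylpos : ∀ (x : ℕ → A) (n : ℕ), 0 < μ (cylSet x n) → 0 < ν (cylSet x n))
    (h : (ℕ → A) → ℝ)
    (hunif : TendstoUniformly
      (fun n x => (μ (cylSet x n)).toReal / (ν (cylSet x n)).toReal)
      h Filter.atTop) :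
    Continuous h ∧
      (∀ x : ℕ → A,
        ∑ a : A, Real.exp (φ (consSeq a x)) * h (consSeq a x) = lam * h x) ∧
      ∃ ε > 0, ∀ x : ℕ → A, ε ≤ h x :=
  uniform_limit_likelihood_ratio_is_eigenfunction_general φ hφ lam hlam ν heigm μ hinv h hunif
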